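/- The Hermitian matrix 𝔣(θ) (as defined from the diamond Toeplitz graph Laplacian, with det 𝔣(θ) = 292(1 - cos θ)) is positive semidefinite for all θ ∈ [-π,π], and positive definite for θ ≠ 0. -/

import Mathlib

open scoped ComplexOrder

open Real

/-- The matrix-valued symbol of the diamond Toeplitz graph Laplacian. -/
noncomputable def diamondSymbol (θ : ℝ) : Matrix (Fin 4) (Fin 4) ℂ :=
  !![(26 : ℂ) - 20 * (Real.cos θ : ℂ), -1, -2, -3;
     -1, 2, 0, -(Real.cos θ : ℂ) + (Real.sin θ : ℂ) * Complex.I;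
     -2, 0, 2, 0;
     -3, -(Real.cos θ : ℂ) - (Real.sin θ : ℂ) * Complex.I, 0, 4]

/-!
`𝔣(θ)` is the symbol of a weighted graph Laplacian, so its quadratic form is a sum of squared
edge differences: the edges `0–1`, `0–2`, `0–3` of weights `1, 2, 3`, the edge `1–3` twisted by
the phase `e^{-iθ}`, and the loop of weight `10` at vertex `0` twisted by `e^{iθ}`, which
contributes `10 |1 - e^{iθ}|² |x₀|² = 20 (1 - cos θ) |x₀|²`. This gives positive
semidefiniteness. For `θ ≠ 0` the loop term is positive unless `x₀ = 0`, and then the three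
edges at vertex `0` force every other coordinate to vanish.
-/

open Complex Matrix

lemma Real.cos_lt_one_of_lt_of_lt {x : ℝ} (hx₁ : -(2 * π) < x) (hx₂ : x < 2 * π)
    (hx : x ≠ 0) : Real.cos x < 1 :=
  (Real.cos_le_one x).lt_of_ne fun h => hx ((Real.cos_eq_one_iff_of_lt_of_lt hx₁ hx₂).mp h)

lemma diamondSymbol_isHermitian (θ : ℝ) : (diamondSymbol θ).IsHermitian := by
  ext i j
  fin_cases i <;> fin_cases j <;>
    simp [diamondSymbol, conjTranspose_apply, Complex.ext_iff]

lemma dotProduct_diamondSymbol_mulVec (θ : ℝ) (x : Fin 4 → ℂ) :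
    star x ⬝ᵥ (diamondSymbol θ *ᵥ x) =
      ((‖x 0 - x 1‖ ^ 2 + 2 * ‖x 0 - x 2‖ ^ 2 + 3 * ‖x 0 - x 3‖ ^ 2
        + ‖x 1 - exp (-(θ * I)) * x 3‖ ^ 2 + 20 * (1 - Real.cos θ) * ‖x 0‖ ^ 2 : ℝ) : ℂ) := by
  have hexp : exp (-(θ * I)) = Real.cos θ - Real.sin θ * I := by
    rw [← neg_mul, ← ofReal_neg, exp_mul_I, ← ofReal_cos, ← ofReal_sin, Real.cos_neg,
      Real.sin_neg]
    push_cast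
    ring
  have hcs : (Real.cos θ : ℂ) ^ 2 + (Real.sin θ : ℂ) ^ 2 = 1 := by
    exact_mod_cast Real.cos_sq_add_sin_sq θ
  simp only [hexp, Complex.sq_norm, ofReal_add, ofReal_mul, ofReal_sub, ofReal_one, ofReal_ofNat,
    normSq_eq_conj_mul_self]
  simp [diamondSymbol, mulVec, dotProduct, Fin.sum_univ_four, map_sub, map_mul,
    -Complex.ofReal_cos, -Complex.ofReal_sin]
  linear_combination (-(starRingEnd ℂ) (x 3) * x 3) * hcs
    + ((Real.sin θ : ℂ) ^ 2 * (starRingEnd ℂ) (x 3) * x 3) * I_sq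

/-- `𝔣(θ)` is positive semidefinite for `θ ∈ [-π,π]`, and positive definite for `θ ≠ 0`. -/
theorem diamondSymbol_posSemidef (θ : ℝ) (hθ : θ ∈ Set.Icc (-π) π) :
    (diamondSymbol θ).PosSemidef ∧ (θ ≠ 0 → (diamondSymbol θ).PosDef) := by
  refine ⟨PosSemidef.of_dotProduct_mulVec_nonneg (diamondSymbol_isHermitian θ) fun x => ?_,
    fun hθ0 => PosDef.of_dotProduct_mulVec_pos (diamondSymbol_isHermitian θ) fun x hx => ?_⟩
  · rw [dotProduct_diamondSymbol_mulVec, zero_le_real]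
    have hc : 0 ≤ 1 - Real.cos θ := sub_nonneg.mpr (Real.cos_le_one θ)
    positivity
  · rw [dotProduct_diamondSymbol_mulVec, zero_lt_real]
    have hc : 0 < 1 - Real.cos θ := sub_pos.mpr <|
      Real.cos_lt_one_of_lt_of_lt (by linarith [hθ.1, pi_pos]) (by linarith [hθ.2, pi_pos]) hθ0
    rcases eq_or_ne (x 0) 0 with h0 | h0
    · have hx' : x 1 ≠ 0 ∨ x 2 ≠ 0 ∨ x 3 ≠ 0 := by
        contrapose! hx
        ext i
        fin_cases i <;> simp [h0, hx]
      simp only [h0, zero_sub, norm_neg]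
      rcases hx' with h | h | h <;> positivity
    · positivity
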